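/- arXiv:2012.03361 — 2 statements merged into one kernel-verified Lean document; each statement's English description precedes it below -/
import Mathlib

section
/- Let A be a positively graded commutative DG algebra with amp(H(A)) = s and A not quasi-isomorphic to zero. Let L be a nonzero semifree DG A-module with semibasis concentrated in degrees n, n+1, ..., n+m for some integers n and m ≥ 0. Then inf(H(L)) ≥ n and sup(H(L)) ≤ s + n + m, hence amp(H(L)) ≤ s + m. -/
universe u v

/-- A (positively graded, graded-commutative) differential graded algebra,
modeled as a ring with an internal `ℤ`-grading by additive subgroups,
together with a degree `-1` differential satisfying the Leibniz rule. -/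
structure DGAlgebra : Type (u + 1) where
  carrier : Type u
  [ring : Ring carrier]
  grading : ℤ → AddSubgroup carrier
  isInternal : DirectSum.IsInternal grading
  positive : ∀ i : ℤ, i < 0 → grading i = ⊥
  one_mem : (1 : carrier) ∈ grading 0
  mul_mem : ∀ {i j : ℤ} {a b : carrier}, a ∈ grading i → b ∈ grading j → a * b ∈ grading (i + j)
  d : carrier →+ carrier
  d_mem : ∀ {i : ℤ} {a : carrier}, a ∈ grading i → d a ∈ grading (i - 1)
  d_d : ∀ a : carrier, d (d a) = 0
  leibniz : ∀ {i : ℤ} {a : carrier} (b : carrier), a ∈ grading i →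
    d (a * b) = d a * b + (((-1 : ℤˣ) ^ i : ℤˣ) : ℤ) • (a * d b)
  gcomm : ∀ {i j : ℤ} {a b : carrier}, a ∈ grading i → b ∈ grading j →
    a * b = (((-1 : ℤˣ) ^ (i * j) : ℤˣ) : ℤ) • (b * a)

attribute [instance] DGAlgebra.ring

/-- A DG module over a DG algebra. -/
structure DGModule (A : DGAlgebra.{u}) : Type (u + 1) where
  carrier : Type u
  [acg : AddCommGroup carrier]
  [mod : Module A.carrier carrier]
  grading : ℤ → AddSubgroup carrier
  isInternal : DirectSum.IsInternal grading
  smul_mem : ∀ {i j : ℤ} {a : A.carrier} {x : carrier},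
    a ∈ A.grading i → x ∈ grading j → a • x ∈ grading (i + j)
  d : carrier →+ carrier
  d_mem : ∀ {i : ℤ} {x : carrier}, x ∈ grading i → d x ∈ grading (i - 1)
  d_d : ∀ x : carrier, d (d x) = 0
  leibniz : ∀ {i : ℤ} {a : A.carrier} (x : carrier), a ∈ A.grading i →
    d (a • x) = A.d a • x + (((-1 : ℤˣ) ^ i : ℤˣ) : ℤ) • (a • d x)

attribute [instance] DGModule.acg DGModule.mod

namespace DGModule

variable {A : DGAlgebra.{u}}

/-- The homology of `M` is nonzero in degree `i`:  there is a homogeneous cycle of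
degree `i` which is not a boundary. -/
def HNonzero (M : DGModule A) (i : ℤ) : Prop :=
  ∃ x ∈ M.grading i, M.d x = 0 ∧ ¬∃ y ∈ M.grading (i + 1), M.d y = x

/-- The set of degrees in which the homology of `M` is nonzero. -/
def hSet (M : DGModule A) : Set ℤ := {i | M.HNonzero i}

/-- Homogeneous cycles of degree `i`. -/
def cycles (M : DGModule A) (i : ℤ) : AddSubgroup M.carrier :=
  M.grading i ⊓ M.d.ker

/-- Boundaries of degree `i` (images of homogeneous elements of degree `i+1`). -/
def boundaries (M : DGModule A) (i : ℤ) : AddSubgroup M.carrier :=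
  (M.grading (i + 1)).map M.d

/-- Degree `i` homology group of a DG module. -/
def Hgrp (M : DGModule A) (i : ℤ) : Type u :=
  M.cycles i ⧸ (M.boundaries i).addSubgroupOf (M.cycles i)

noncomputable instance (M : DGModule A) (i : ℤ) : AddCommGroup (M.Hgrp i) :=
  QuotientAddGroup.Quotient.addCommGroup _

end DGModule

/-- A DG algebra as a DG module over itself. -/
def DGAlgebra.toDGModule (A : DGAlgebra.{u}) : DGModule A where
  carrier := A.carrier
  grading := A.grading
  isInternal := A.isInternal
  smul_mem := fun ha hx => A.mul_mem ha hx
  d := A.d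
  d_mem := A.d_mem
  d_d := A.d_d
  leibniz := fun x ha => A.leibniz x ha

/-- A semibasis of a DG module: a basis of the underlying module consisting of
homogeneous elements. -/
structure Semibasis {A : DGAlgebra.{u}} (M : DGModule A) (ι : Type v) where
  b : Module.Basis ι A.carrier M.carrier
  deg : ι → ℤ
  mem : ∀ i, b i ∈ M.grading (deg i)

/-- A morphism of DG modules. -/
structure DGHom {A : DGAlgebra.{u}} (M N : DGModule A) where
  toFun : M.carrier →ₗ[A.carrier] N.carrier
  map_d : ∀ x, toFun (M.d x) = N.d (toFun x)
  map_grading : ∀ {i : ℤ} {x}, x ∈ M.grading i → toFun x ∈ N.grading i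

/-- A morphism of DG modules is a quasiisomorphism if it induces a bijection on
homology in every degree. -/
def DGHom.IsQuasiIso {A : DGAlgebra.{u}} {M N : DGModule A} (φ : DGHom M N) : Prop :=
  (∀ i : ℤ, ∀ z ∈ N.grading i, N.d z = 0 →
      ∃ x ∈ M.grading i, M.d x = 0 ∧ ∃ w ∈ N.grading (i + 1), N.d w = φ.toFun x - z) ∧
  (∀ i : ℤ, ∀ x ∈ M.grading i, M.d x = 0 →
      (∃ w ∈ N.grading (i + 1), N.d w = φ.toFun x) → ∃ y ∈ M.grading (i + 1), M.d y = x)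

/-- Witness that `T` is the tensor product `L ⊗_A Y`, where `L` is semifree with
semibasis `S`.  (For semifree `L` this computes the derived tensor product `L ⊗^L_A Y`.) -/
structure SemifreeTensor {A : DGAlgebra.{u}} {ι : Type v} (L Y T : DGModule A)
    (S : Semibasis L ι) where
  pair : L.carrier →+ Y.carrier →+ T.carrier
  pair_smul : ∀ (a : A.carrier) (x : L.carrier) (y : Y.carrier),
    pair (a • x) y = a • pair x y
  pair_grading : ∀ {i j : ℤ} {x : L.carrier} {y : Y.carrier},
    x ∈ L.grading i → y ∈ Y.grading j → pair x y ∈ T.grading (i + j)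
  pair_leibniz : ∀ {i : ℤ} {x : L.carrier} (y : Y.carrier), x ∈ L.grading i →
    T.d (pair x y) = pair (L.d x) y + (((-1 : ℤˣ) ^ i : ℤˣ) : ℤ) • pair x (Y.d y)
  bij : Function.Bijective fun f : ι →₀ Y.carrier => f.sum fun i y => pair (S.b i) y

/-- Data computing all the iterated derived tensor products of a family
`K : Fin n → DGModule A`:  semifree resolutions `F j` of the `K j`, and for each
subset `I ⊆ Fin n` a DG module `T I` modeling `⊗^L_{i ∈ I} K i`, computed as the
tensor product of the corresponding semifree resolutions. -/
structure DerivedTensorSystem (A : DGAlgebra.{u}) (n : ℕ) (K : Fin n → DGModule A) where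
  F : Fin n → DGModule A
  idx : Fin n → Type u
  S : ∀ j, Semibasis (F j) (idx j)
  res : ∀ j, DGHom (F j) (K j)
  res_qi : ∀ j, (res j).IsQuasiIso
  T : Finset (Fin n) → DGModule A
  T_empty : T ∅ = A.toDGModule
  step : ∀ (I : Finset (Fin n)) (j : Fin n), j ∉ I →
    SemifreeTensor (F j) (T I) (T (insert j I)) (S j)

/-- The DG version of strong Tor-independence: every sub-tensor-product has
homology of amplitude at most `s`. -/
def DerivedTensorSystem.StronglyTorIndependent {A : DGAlgebra.{u}} {n : ℕ}
    {K : Fin n → DGModule A} (D : DerivedTensorSystem A n K) (s : ℤ) : Prop :=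
  ∀ I : Finset (Fin n), ∀ k₁ ∈ (D.T I).hSet, ∀ k₂ ∈ (D.T I).hSet, k₂ - k₁ ≤ s

/-- The set of elements of `m_A • L`, where `m_A = A_+`. -/
def mAL {A : DGAlgebra.{u}} (L : DGModule A) : AddSubgroup L.carrier :=
  AddSubgroup.closure {z : L.carrier | ∃ (i : ℤ) (a : A.carrier) (x : L.carrier),
    0 < i ∧ a ∈ A.grading i ∧ z = a • x}

/-- The data of the DG syzygy construction `Syz_r(K)`:  a minimal semifree resolution
`Fres ≃ K`, the soft truncation `Kt = τ_{≤ r}(Fres) ≃ K`, the semifree submodule `L`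
spanned by the semibasis elements of degrees `≤ r`, and the short exact sequence
`0 → syz → L → Kt → 0` with `syz ⊆ m_A L` and `syz` trivial in degrees `< r`. -/
structure SyzygyData (A : DGAlgebra.{u}) (K : DGModule A) (r : ℤ) where
  syz : DGModule A
  L : DGModule A
  Kt : DGModule A
  Fres : DGModule A
  toK : DGHom Fres K
  toK_qi : toK.IsQuasiIso
  toKt : DGHom Fres Kt
  toKt_qi : toKt.IsQuasiIso
  idx : Type u
  idx_finite : Finite idx
  S : Semibasis L idx
  deg_le : ∀ e, S.deg e ≤ r
  α : DGHom syz L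
  α_inj : Function.Injective α.toFun
  π : DGHom L Kt
  π_surj : Function.Surjective π.toFun
  exact : ∀ x, π.toFun x = 0 ↔ ∃ y, α.toFun y = x
  trunc : ∀ i : ℤ, r < i → Kt.grading i = ⊥
  below : ∀ i : ℤ, i < r → syz.grading i = ⊥
  in_mL : ∀ y, α.toFun y ∈ mAL L

/-!
In a semifree module the coefficient of a degree-`k` element at a basis element of degree `e`
lies in `A_{k-e}`; as `A` lives in nonnegative degrees, `L` vanishes below degree `n`.
Above degree `sup H(A) + n + m` a cycle is killed one layer of the semibasis at a time, from the
top down: its top-layer coefficients are cycles of `A` in degrees above `sup H(A)`, hence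
boundaries `d cᵢ`, and subtracting `d (∑ cᵢ bᵢ)` removes that layer without creating new terms
in degrees at or above it. Finally `H₀(A) ≠ 0`, since `1 = d y` would make every cycle `w` the
boundary `d (y w)`; so `inf H(A) ≤ 0` and `sup H(A) ≤ s`.
-/

theorem Module.Basis.repr_sum_smul_self_apply {ι R M : Type*} [Semiring R] [AddCommMonoid M]
    [Module R M] [DecidableEq ι] (b : Module.Basis ι R M) (s : Finset ι) (c : ι → R) (i : ι) :
    b.repr (∑ j ∈ s, c j • b j) i = if i ∈ s then c i else 0 := by
  simp [Finsupp.single_apply]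

theorem Module.Basis.eq_sum_repr_smul {ι R M : Type*} [Semiring R] [AddCommMonoid M]
    [Module R M] (b : Module.Basis ι R M) (x : M) :
    x = ∑ j ∈ (b.repr x).support, b.repr x j • b j := by
  conv_lhs => rw [← b.linearCombination_repr x, Finsupp.linearCombination_apply, Finsupp.sum]

namespace DGAlgebra

variable (A : DGAlgebra.{u})

theorem d_one : A.d 1 = 0 := by
  simpa using A.leibniz (1 : A.carrier) A.one_mem

theorem zero_mem_hSet (h : A.toDGModule.hSet.Nonempty) : 0 ∈ A.toDGModule.hSet := by
  obtain ⟨j, w : A.carrier, hw, hdw : A.d w = 0, hnb⟩ := h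
  refine ⟨(1 : A.carrier), A.one_mem, A.d_one,
    fun ⟨(y : A.carrier), hy, (hdy : A.d y = 1)⟩ => hnb ⟨y * w, ?_, ?_⟩⟩
  · have hyw := A.mul_mem hy hw
    rwa [zero_add, add_comm] at hyw
  · have hyw := A.leibniz w hy
    rwa [hdy, hdw, one_mul, mul_zero, smul_zero, add_zero] at hyw

end DGAlgebra

namespace DGModule

open DirectSum

variable {A : DGAlgebra.{u}} (M : DGModule A)
variable [Decomposition A.grading] [Decomposition M.grading]

theorem decompose_smul_of_mem {e : ℤ} {y : M.carrier} (hy : y ∈ M.grading e) (k : ℤ)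
    (a : A.carrier) :
    (decompose M.grading (a • y) k : M.carrier) =
      (decompose A.grading a (k - e) : A.carrier) • y := by
  induction a using Decomposition.inductionOn A.grading with
  | zero => simp
  | add a b ha hb =>
    simp only [add_smul, decompose_add, DirectSum.add_apply, AddSubgroup.coe_add, ha, hb]
  | @homogeneous t a =>
    have hay : (a : A.carrier) • y ∈ M.grading (t + e) := M.smul_mem a.2 hy
    by_cases hk : t + e = k
    · subst hk
      rw [decompose_of_mem_same _ hay, add_sub_cancel_right, decompose_of_mem_same _ a.2]
    · rw [decompose_of_mem_ne _ hay hk, decompose_of_mem_ne _ a.2 (by omega), zero_smul]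

end DGModule

namespace Semibasis

variable {A : DGAlgebra.{u}} {L : DGModule A} {ι : Type v} (S : Semibasis L ι)

theorem repr_mem {k : ℤ} {x : L.carrier} (hx : x ∈ L.grading k) (i : ι) :
    S.b.repr x i ∈ A.grading (k - S.deg i) := by
  classical
  let := A.isInternal.chooseDecomposition
  let := L.isInternal.chooseDecomposition
  have hx_eq : x = ∑ j ∈ (S.b.repr x).support,
      (DirectSum.decompose A.grading (S.b.repr x j) (k - S.deg j) : A.carrier) • S.b j := by
    conv_lhs => rw [← DirectSum.decompose_of_mem_same L.grading hx, S.b.eq_sum_repr_smul x]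
    simp only [DirectSum.decompose_sum, DirectSum.sum_apply, AddSubgroup.val_finsetSum,
      L.decompose_smul_of_mem (S.mem _)]
  have hfi := congrArg (fun y => S.b.repr y i) hx_eq
  simp only [S.b.repr_sum_smul_self_apply] at hfi
  split_ifs at hfi
  · exact hfi ▸ SetLike.coe_mem _
  · exact hfi ▸ zero_mem _

theorem repr_apply_eq_zero_of_lt {k : ℤ} {x : L.carrier} (hx : x ∈ L.grading k) {i : ι}
    (hk : k < S.deg i) : S.b.repr x i = 0 := by
  simpa [A.positive _ (by omega : k - S.deg i < 0)] using S.repr_mem hx i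

theorem eq_zero_of_mem_grading_of_lt {n k : ℤ} (hn : ∀ i, n ≤ S.deg i) {x : L.carrier}
    (hx : x ∈ L.grading k) (hk : k < n) : x = 0 :=
  S.b.repr.map_eq_zero_iff.mp <| Finsupp.ext fun i =>
    S.repr_apply_eq_zero_of_lt hx (by linarith [hn i])

/-- `d (∑ aⱼ bⱼ) = ∑ (d aⱼ) bⱼ ± aⱼ (d bⱼ)`, and `d bⱼ` only involves basis elements of degree
`< deg bⱼ`. -/
theorem repr_d_apply_of_support_le {k : ℤ} {y : L.carrier} (hy : y ∈ L.grading k) {i₀ : ι}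
    (htop : ∀ i ∈ (S.b.repr y).support, S.deg i ≤ S.deg i₀) :
    S.b.repr (L.d y) i₀ = A.d (S.b.repr y i₀) := by
  classical
  set f := S.b.repr y
  have hdy : L.d y = ∑ j ∈ f.support,
      (A.d (f j) • S.b j + (((-1 : ℤˣ) ^ (k - S.deg j) : ℤˣ) : ℤ) • (f j • L.d (S.b j))) := by
    conv_lhs => rw [S.b.eq_sum_repr_smul y, map_sum]
    exact Finset.sum_congr rfl fun j _ => L.leibniz _ (S.repr_mem hy j)
  have hlow : ∀ j ∈ f.support, S.b.repr (L.d (S.b j)) i₀ = 0 := fun j hj =>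
    S.repr_apply_eq_zero_of_lt (L.d_mem (S.mem j)) (by linarith [htop j hj])
  calc S.b.repr (L.d y) i₀ = ∑ j ∈ f.support, S.b.repr (A.d (f j) • S.b j) i₀ := by
        rw [hdy, map_sum, Finsupp.finsetSum_apply]
        refine Finset.sum_congr rfl fun j hj => ?_
        simp [hlow j hj]
    _ = A.d (f i₀) := by
        simp only [map_smul, Module.Basis.repr_self, Finsupp.smul_single, smul_eq_mul, mul_one,
          Finsupp.single_apply, Finset.sum_ite_eq', Finsupp.mem_support_iff]
        split_ifs with h
        · rfl
        · rw [not_not.mp h, map_zero]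

theorem exists_mem_grading_support_sub_d_lt {k p : ℤ} (hH : k - p ∉ A.toDGModule.hSet)
    {x : L.carrier} (hx : x ∈ L.grading k) (hdx : L.d x = 0)
    (hsupp : ∀ i ∈ (S.b.repr x).support, S.deg i ≤ p) :
    ∃ z ∈ L.grading (k + 1), ∀ i ∈ (S.b.repr (x - L.d z)).support, S.deg i < p := by
  classical
  set f := S.b.repr x
  set J := f.support.filter (S.deg · = p)
  have hbdry : ∀ i ∈ J, ∃ c ∈ A.grading (k - S.deg i + 1), A.d c = f i := by
    intro i hi
    obtain ⟨hi, hip⟩ := Finset.mem_filter.mp hi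
    have hcyc : A.d (f i) = 0 := by
      rw [← S.repr_d_apply_of_support_le hx (hip ▸ hsupp), hdx, map_zero, Finsupp.zero_apply]
    by_contra! hnb
    refine hH ⟨f i, hip ▸ S.repr_mem hx i, hcyc, fun ⟨c, hc, hdc⟩ => hnb c ?_ hdc⟩
    rwa [hip]
  choose! c hc hdc using hbdry
  have hz : ∑ i ∈ J, c i • S.b i ∈ L.grading (k + 1) := by
    refine sum_mem fun i hi => ?_
    have hci := L.smul_mem (hc i hi) (S.mem i)
    rwa [sub_add_eq_add_sub, sub_add_cancel] at hci
  refine ⟨_, hz, fun i hi => ?_⟩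
  by_contra! hpi
  refine Finsupp.mem_support_iff.mp hi ?_
  rw [map_sub, Finsupp.sub_apply, S.repr_d_apply_of_support_le hz, S.b.repr_sum_smul_self_apply]
  · split_ifs with hiJ
    · rw [hdc i hiJ, sub_self]
    · have hfi : f i = 0 := by
        by_contra hfi
        have hif : i ∈ f.support := Finsupp.mem_support_iff.mpr hfi
        exact hiJ (Finset.mem_filter.mpr ⟨hif, (hsupp i hif).antisymm hpi⟩)
      rw [hfi, map_zero, sub_zero]
  · intro j hj
    rw [Finsupp.mem_support_iff, S.b.repr_sum_smul_self_apply] at hj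
    split_ifs at hj with hjJ
    · exact (Finset.mem_filter.mp hjJ).2.trans_le hpi
    · exact absurd rfl hj

theorem exists_d_eq_of_support_lt {n sa : ℤ} (hn : ∀ i, n ≤ S.deg i)
    (hA : sa ∈ upperBounds A.toDGModule.hSet) {p : ℤ} (hp : n ≤ p) {k : ℤ} (hpk : sa + p ≤ k)
    {x : L.carrier} (hx : x ∈ L.grading k) (hdx : L.d x = 0)
    (hsupp : ∀ i ∈ (S.b.repr x).support, S.deg i < p) :
    ∃ y ∈ L.grading (k + 1), L.d y = x := by
  induction p, hp using Int.leInduction generalizing x with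
  | base =>
    have hx0 : x = 0 := S.b.repr.map_eq_zero_iff.mp <| Finsupp.support_eq_empty.mp <|
      Finset.eq_empty_of_forall_notMem fun i hi => (hsupp i hi).not_ge (hn i)
    exact ⟨0, zero_mem _, by rw [map_zero, hx0]⟩
  | succ p _ ih =>
    obtain ⟨z, hz, hsupp'⟩ := S.exists_mem_grading_support_sub_d_lt
      (fun h => by linarith [hA h]) hx hdx fun i hi => Int.lt_add_one_iff.mp (hsupp i hi)
    obtain ⟨y, hy, hdy⟩ := ih (by linarith) (sub_mem hx (by simpa using L.d_mem hz))
      (by rw [map_sub, hdx, L.d_d, sub_zero]) hsupp'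
    exact ⟨y + z, add_mem hy hz, by rw [map_add, hdy, sub_add_cancel]⟩

theorem le_of_mem_hSet {n k : ℤ} (hn : ∀ i, n ≤ S.deg i) (hk : k ∈ L.hSet) : n ≤ k := by
  obtain ⟨x, hx, -, hnb⟩ := hk
  by_contra! hkn
  exact hnb ⟨0, zero_mem _, by rw [map_zero, S.eq_zero_of_mem_grading_of_lt hn hx hkn]⟩

theorem le_add_of_mem_hSet {n N sa k : ℤ} (hn : ∀ i, n ≤ S.deg i) (hN : ∀ i, S.deg i ≤ N)
    (hnN : n ≤ N) (hA : sa ∈ upperBounds A.toDGModule.hSet) (hk : k ∈ L.hSet) :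
    k ≤ sa + N := by
  obtain ⟨x, hx, hdx, hnb⟩ := hk
  by_contra! hkN
  exact hnb <| S.exists_d_eq_of_support_lt hn hA (p := N + 1) (by omega) (by omega) hx hdx
    fun i _ => Int.lt_add_one_iff.mpr (hN i)

end Semibasis

theorem stmt2_general (A : DGAlgebra.{u}) (L : DGModule A) (ι : Type u) (S : Semibasis L ι)
    (n m : ℤ) (hm : 0 ≤ m) (hdeg : ∀ i, n ≤ S.deg i ∧ S.deg i ≤ n + m)
    (sa ia s : ℤ)
    (hsa : IsGreatest A.toDGModule.hSet sa)
    (hia : IsLeast A.toDGModule.hSet ia)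
    (hs : s = sa - ia) :
    (∀ k ∈ L.hSet, n ≤ k ∧ k ≤ s + n + m) ∧
      (∀ k₁ ∈ L.hSet, ∀ k₂ ∈ L.hSet, k₂ - k₁ ≤ s + m) := by
  have hia0 : ia ≤ 0 := hia.2 (A.zero_mem_hSet ⟨sa, hsa.1⟩)
  have hlow : ∀ k ∈ L.hSet, n ≤ k := fun k hk => S.le_of_mem_hSet (fun i => (hdeg i).1) hk
  have hhigh : ∀ k ∈ L.hSet, k ≤ sa + (n + m) := fun k hk =>
    S.le_add_of_mem_hSet (fun i => (hdeg i).1) (fun i => (hdeg i).2) (by omega) hsa.2 hk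
  refine ⟨fun k hk => ⟨hlow k hk, ?_⟩, fun k₁ h₁ k₂ h₂ => ?_⟩
  · linarith [hhigh k hk]
  · linarith [hlow k₁ h₁, hhigh k₂ h₂]

/-- If `A` is a positively graded DG algebra with `amp H(A) = s`,
`A ≄ 0`, and `L` is a nonzero semifree DG `A`-module with semibasis concentrated in
degrees `n, n+1, …, n+m` with `m ≥ 0`, then `inf H(L) ≥ n` and `sup H(L) ≤ s + n + m`,
hence `amp H(L) ≤ s + m`. -/
theorem stmt2 (A : DGAlgebra.{u}) (L : DGModule A) (ι : Type u) (S : Semibasis L ι)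
    (n m : ℤ) (hm : 0 ≤ m) (hdeg : ∀ i, n ≤ S.deg i ∧ S.deg i ≤ n + m)
    (sa ia s : ℤ)
    (hsa : IsGreatest A.toDGModule.hSet sa)
    (hia : IsLeast A.toDGModule.hSet ia)
    (hs : s = sa - ia)
    (hL : ∃ x : L.carrier, x ≠ 0) :
    (∀ k ∈ L.hSet, n ≤ k ∧ k ≤ s + n + m) ∧
      (∀ k₁ ∈ L.hSet, ∀ k₂ ∈ L.hSet, k₂ - k₁ ≤ s + m) :=
  stmt2_general A L ι S n m hm hdeg sa ia s hsa hia hs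
end

section
/- Let (A, m_A) be a local homologically bounded DG algebra with amp(H(A)) = s, A not quasi-isomorphic to zero and m_A = A_+ (so A_0 is a field). Let K be a homologically finite DG A-module with amp(H(K)) ≤ s, let r ≥ sup(H(K)), and let K' = Syz_r(K) be the r-th DG syzygy of K. Then sup(H(K')) ≤ s + r, inf(H(K')) ≥ r, and therefore amp(H(K')) ≤ s. -/
universe u v

/-! Since `H(A) ≠ 0` and `1` is not a boundary (else every cycle `ζ` would be `d (y * ζ)`),
`inf H(A) ≤ 0`, so `sup H(A) ≤ s`. The semifree module `L` has finitely many basis elements,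
all of degree `≤ r`, and `A` is positively graded, so `d` lowers the degree of the basis
elements involved; killing the top-degree coefficients of a cycle one degree at a time shows
`H_j(L) = 0` for `j > sup H(A) + r`. A cycle of `Syz_r(K)` of degree `j > s + r` is then a
boundary `d w` in `L`; since `w` has degree `> r`, its image in `K̃ = τ_{≤ r}(F)` vanishes, so
`w` comes from `Syz_r(K)`. The lower bound holds because `Syz_r(K)` vanishes below degree `r`. -/

namespace DirectSum

variable {ι M N σ τ : Type*} [DecidableEq ι] [AddCommMonoid M] [AddCommMonoid N]
  [SetLike σ M] [AddSubmonoidClass σ M] [SetLike τ N] [AddSubmonoidClass τ N]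
  {ℳ : ι → σ} {𝒩 : ι → τ} [Decomposition ℳ] [Decomposition 𝒩]

theorem mem_of_decompose_eq_zero {x : M} {j : ι}
    (h : ∀ i ≠ j, (decompose ℳ x i : M) = 0) : x ∈ ℳ j := by
  classical
  rw [← sum_support_decompose ℳ x]
  refine sum_mem fun i _ => ?_
  by_cases hij : i = j
  · exact hij ▸ (decompose ℳ x i).2
  · exact h i hij ▸ zero_mem _

theorem decompose_map_of_mapsTo {F : Type*} [FunLike F M N] [AddMonoidHomClass F M N]
    (φ : F) (hφ : ∀ i, ∀ x ∈ ℳ i, φ x ∈ 𝒩 i) (x : M) (i : ι) :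
    (decompose 𝒩 (φ x) i : N) = φ (decompose ℳ x i) := by
  induction x using Decomposition.inductionOn ℳ with
  | zero => simp
  | @homogeneous j m =>
    by_cases hji : j = i
    · subst hji
      rw [decompose_of_mem_same ℳ m.2, decompose_of_mem_same 𝒩 (hφ j m m.2)]
    · rw [decompose_of_mem_ne ℳ m.2 hji, decompose_of_mem_ne 𝒩 (hφ j m m.2) hji, map_zero]
  | add x y hx hy => simp [hx, hy]

end DirectSum

open DirectSum

noncomputable instance DGAlgebra.instDecomposition (A : DGAlgebra.{u}) :
    Decomposition A.grading :=
  A.isInternal.chooseDecomposition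

noncomputable instance DGModule.instDecomposition {A : DGAlgebra.{u}} (M : DGModule A) :
    Decomposition M.grading :=
  M.isInternal.chooseDecomposition

namespace DGModule

variable {A : DGAlgebra.{u}} {M : DGModule A}

theorem exists_d_eq_of_notMem_hSet {i : ℤ} (hi : i ∉ M.hSet) {x : M.carrier}
    (hx : x ∈ M.grading i) (hdx : M.d x = 0) : ∃ y ∈ M.grading (i + 1), M.d y = x := by
  by_contra h
  exact hi ⟨x, hx, hdx, h⟩

theorem le_of_mem_hSet {r : ℤ} (h : ∀ i < r, M.grading i = ⊥) {k : ℤ} (hk : k ∈ M.hSet) :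
    r ≤ k := by
  by_contra! hkr
  obtain ⟨x, hx, -, hnb⟩ := hk
  rw [h k hkr, AddSubgroup.mem_bot] at hx
  exact hnb ⟨0, zero_mem _, by rw [map_zero, hx]⟩

end DGModule

theorem DGAlgebra.d_one_s6 (A : DGAlgebra.{u}) : A.d 1 = 0 := by
  simpa using A.leibniz (1 : A.carrier) A.one_mem

theorem DGAlgebra.zero_mem_hSet_s6 (A : DGAlgebra.{u}) (h : A.toDGModule.hSet.Nonempty) :
    0 ∈ A.toDGModule.hSet := by
  obtain ⟨i, hi⟩ := h
  obtain ⟨ζ, hζ, hdζ, hnb⟩ : ∃ ζ ∈ A.grading i, A.d ζ = 0 ∧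
      ¬∃ y ∈ A.grading (i + 1), A.d y = ζ := hi
  refine ⟨(1 : A.carrier), A.one_mem, A.d_one_s6, fun hb => ?_⟩
  obtain ⟨y, hy, hdy⟩ : ∃ y ∈ A.grading (0 + 1), A.d y = 1 := hb
  rw [zero_add] at hy
  refine hnb ⟨y * ζ, by simpa [add_comm] using A.mul_mem hy hζ, ?_⟩
  simpa [hdy, hdζ] using A.leibniz ζ hy

theorem DGHom.mem_grading_of_injective {A : DGAlgebra.{u}} {M N : DGModule A}
    (φ : DGHom M N) (hφ : Function.Injective φ.toFun) {v : M.carrier} {j : ℤ}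
    (hv : φ.toFun v ∈ N.grading j) : v ∈ M.grading j :=
  mem_of_decompose_eq_zero fun i hi => hφ <| by
    rw [map_zero,
      ← decompose_map_of_mapsTo (ℳ := M.grading) φ.toFun (fun _ _ => φ.map_grading),
      decompose_of_mem_ne _ hv (Ne.symm hi)]

namespace Semibasis

variable {A : DGAlgebra.{u}} {M : DGModule A} {ι : Type v} (S : Semibasis M ι)

theorem repr_smul_self (a : A.carrier) (e : ι) : S.b.repr (a • S.b e) = Finsupp.single e a := by
  rw [map_smul, Module.Basis.repr_self, Finsupp.smul_single, smul_eq_mul, mul_one]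

@[elab_as_elim]
theorem induction_on {motive : M.carrier → Prop} (zero : motive 0)
    (add : ∀ x y, motive x → motive y → motive (x + y))
    (smul_self : ∀ {i : ℤ} (a : A.grading i) (e : ι), motive ((a : A.carrier) • S.b e))
    (z : M.carrier) : motive z := by
  rw [← S.b.linearCombination_repr z, Finsupp.linearCombination_apply]
  refine Finset.sum_induction _ motive add zero fun e _ => ?_
  induction S.b.repr z e using Decomposition.inductionOn A.grading with
  | zero => simpa using zero
  | homogeneous a => exact smul_self a e
  | add a a' ha ha' => simpa [add_smul] using add _ _ ha ha'

theorem repr_decompose (z : M.carrier) (k : ℤ) (f : ι) :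
    S.b.repr (decompose M.grading z k) f = decompose A.grading (S.b.repr z f) (k - S.deg f) := by
  induction z using S.induction_on with
  | zero => simp
  | add x y hx hy => simp [hx, hy]
  | @smul_self i a e =>
    classical
    have hae : (a : A.carrier) • S.b e ∈ M.grading (i + S.deg e) := M.smul_mem a.2 (S.mem e)
    rw [repr_smul_self, Finsupp.single_apply]
    by_cases hk : i + S.deg e = k
    · rw [decompose_of_mem_same _ (hk ▸ hae), repr_smul_self, Finsupp.single_apply]
      split_ifs with hef
      · rw [← hef, ← hk, add_sub_cancel_right, decompose_of_mem_same _ a.2]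
      · simp
    · rw [decompose_of_mem_ne _ hae hk, map_zero, Finsupp.zero_apply]
      split_ifs with hef
      · rw [← hef, decompose_of_mem_ne _ a.2 (by omega)]
      · simp

theorem repr_mem_grading {z : M.carrier} {j : ℤ} (hz : z ∈ M.grading j) (f : ι) :
    S.b.repr z f ∈ A.grading (j - S.deg f) :=
  mem_of_decompose_eq_zero fun i hi => by
    have := S.repr_decompose z (i + S.deg f) f
    rwa [add_sub_cancel_right, decompose_of_mem_ne _ hz (by omega), map_zero,
      Finsupp.zero_apply, eq_comm] at this

theorem repr_d_self_of_le {e f : ι} (h : S.deg e ≤ S.deg f) : S.b.repr (M.d (S.b e)) f = 0 := by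
  have := S.repr_mem_grading (M.d_mem (S.mem e)) f
  rwa [A.positive _ (by omega), AddSubgroup.mem_bot] at this

/-- Positivity of `A` makes `d (S.b f)` a combination of basis elements of lower degree, so
the top-degree coefficients of `d z` only see the differentials of the coefficients of `z`. -/
theorem repr_d {z : M.carrier} {j : ℤ} (hz : z ∈ M.grading j) {e : ι}
    (he : ∀ f, S.deg e < S.deg f → S.b.repr z f = 0) :
    S.b.repr (M.d z) e = A.d (S.b.repr z e) := by
  classical
  have hterm : ∀ f, S.b.repr (M.d (S.b.repr z f • S.b f)) e =
      Finsupp.single f (A.d (S.b.repr z f)) e := by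
    intro f
    rw [M.leibniz _ (S.repr_mem_grading hz f), map_add, Finsupp.add_apply, repr_smul_self,
      map_zsmul, map_smul, Finsupp.smul_apply, Finsupp.smul_apply, smul_eq_mul]
    rcases le_or_gt (S.deg f) (S.deg e) with hfe | hef
    · rw [S.repr_d_self_of_le hfe, mul_zero, smul_zero, add_zero]
    · rw [he f hef, zero_mul, smul_zero, add_zero]
  conv_lhs => rw [← S.b.linearCombination_repr z, Finsupp.linearCombination_apply]
  rw [Finsupp.sum, map_sum, map_sum, Finsupp.finsetSum_apply]
  simp_rw [hterm, Finsupp.single_apply, Finset.sum_ite_eq', Finsupp.mem_support_iff]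
  split_ifs with hze
  · rfl
  · rw [not_not.mp hze, map_zero]

/-- The coefficients of `z` along the basis elements of top degree `p` are cycles of `A` in
degree `j - p > sa`, hence boundaries `d a_e`; subtracting `d (∑ a_e • S.b e)` lowers the top
degree. -/
theorem exists_repr_sub_d_eq_zero {sa : ℤ} (hA : sa ∈ upperBounds A.toDGModule.hSet)
    {z : M.carrier} {j p : ℤ} (hz : z ∈ M.grading j) (hdz : M.d z = 0)
    (hzp : ∀ f, p < S.deg f → S.b.repr z f = 0) (hp : sa + p < j) :
    ∃ u ∈ M.grading (j + 1), ∀ f, p ≤ S.deg f → S.b.repr (z - M.d u) f = 0 := by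
  classical
  have hbd : ∀ e, ∃ a ∈ A.grading (j - p + 1), S.deg e = p → A.d a = S.b.repr z e := by
    intro e
    by_cases he : S.deg e = p
    · have hcyc : A.d (S.b.repr z e) = 0 := by
        rw [← S.repr_d hz fun f hf => hzp f (he ▸ hf), hdz, map_zero, Finsupp.zero_apply]
      obtain ⟨a, ha, hda⟩ := A.toDGModule.exists_d_eq_of_notMem_hSet
        (fun h => absurd (hA h) (by omega)) (he ▸ S.repr_mem_grading hz e) hcyc
      exact ⟨a, ha, fun _ => hda⟩
    · exact ⟨0, zero_mem _, fun h => absurd h he⟩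
  choose a ha hda using hbd
  set T := (S.b.repr z).support.filter fun e => S.deg e = p
  have hu : ∑ e ∈ T, a e • S.b e ∈ M.grading (j + 1) := by
    refine sum_mem fun e he => ?_
    have := M.smul_mem (ha e) (S.mem e)
    rwa [(Finset.mem_filter.mp he).2, show j - p + 1 + p = j + 1 by ring] at this
  have hrepr_u : ∀ f, S.b.repr (∑ e ∈ T, a e • S.b e) f = if f ∈ T then a f else 0 := by
    intro f
    simp_rw [map_sum, repr_smul_self, Finsupp.finsetSum_apply, Finsupp.single_apply,
      Finset.sum_ite_eq']
  refine ⟨_, hu, fun f hf => ?_⟩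
  have hTf : ∀ g, S.deg f < S.deg g → g ∉ T := fun g hg hgT => by
    have := (Finset.mem_filter.mp hgT).2
    omega
  rw [map_sub, Finsupp.sub_apply, S.repr_d hu fun g hg => by rw [hrepr_u, if_neg (hTf g hg)],
    hrepr_u]
  split_ifs with hfT
  · rw [hda f (Finset.mem_filter.mp hfT).2, sub_self]
  · rw [map_zero, sub_zero]
    by_contra hzf
    rcases hf.lt_or_eq with hlt | heq
    · exact hzf (hzp f hlt)
    · exact hfT (Finset.mem_filter.mpr ⟨Finsupp.mem_support_iff.mpr hzf, heq.symm⟩)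

theorem exists_d_eq_of_deg_le [Finite ι] {sa r : ℤ} (hA : sa ∈ upperBounds A.toDGModule.hSet)
    (hdeg : ∀ e, S.deg e ≤ r) {j : ℤ} (hj : sa + r < j) {z : M.carrier}
    (hz : z ∈ M.grading j) (hdz : M.d z = 0) : ∃ w ∈ M.grading (j + 1), M.d w = z := by
  obtain ⟨m, hm⟩ := (Set.finite_range S.deg).bddBelow
  -- induction on the top degree `p`, starting below every basis degree (and below `r`)
  suffices key : ∀ p, min m r - 1 ≤ p → p ≤ r → ∀ z ∈ M.grading j, M.d z = 0 →
      (∀ f, p < S.deg f → S.b.repr z f = 0) → ∃ w ∈ M.grading (j + 1), M.d w = z from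
    key r (by omega) le_rfl z hz hdz fun f hf => absurd (hdeg f) (by omega)
  intro p hp
  induction p, hp using Int.leInduction with
  | base =>
    intro _ z _ _ hz0
    have : z = 0 := S.b.repr.map_eq_zero_iff.mp <| Finsupp.ext fun f =>
      hz0 f (by have := hm ⟨f, rfl⟩; omega)
    exact ⟨0, zero_mem _, by rw [map_zero, this]⟩
  | succ p _ ih =>
    intro hpr z hz hdz hzp
    obtain ⟨u, hu, hzu⟩ := S.exists_repr_sub_d_eq_zero hA hz hdz hzp (by omega)
    obtain ⟨w, hw, hdw⟩ := ih (by omega) (z - M.d u) (sub_mem hz (by simpa using M.d_mem hu))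
      (by rw [map_sub, hdz, M.d_d, sub_zero]) fun f hf => hzu f (by omega)
    exact ⟨w + u, add_mem hw hu, by rw [map_add, hdw, sub_add_cancel]⟩

end Semibasis

theorem SyzygyData.le_of_mem_hSet_syz {A : DGAlgebra.{u}} {K : DGModule A} {r : ℤ}
    (D : SyzygyData A K r) {sa : ℤ} (hA : sa ∈ upperBounds A.toDGModule.hSet) {k : ℤ}
    (hk : k ∈ D.syz.hSet) : k ≤ sa + r := by
  have := D.idx_finite
  have hrk := D.syz.le_of_mem_hSet D.below hk
  obtain ⟨x, hx, hdx, hnb⟩ := hk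
  by_contra! hkr
  obtain ⟨w, hw, hdw⟩ := D.S.exists_d_eq_of_deg_le hA D.deg_le hkr (D.α.map_grading hx)
    (by rw [← D.α.map_d, hdx, map_zero])
  have hπw : D.π.toFun w = 0 := by
    have := D.π.map_grading hw
    rwa [D.trunc _ (by omega), AddSubgroup.mem_bot] at this
  obtain ⟨v, rfl⟩ := (D.exact w).1 hπw
  exact hnb ⟨v, D.α.mem_grading_of_injective D.α_inj hw, D.α_inj (by rw [D.α.map_d, hdw])⟩

theorem stmt6_general (A : DGAlgebra.{u})
    (sa ia s : ℤ)
    (hsa : IsGreatest A.toDGModule.hSet sa)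
    (hia : IsLeast A.toDGModule.hSet ia)
    (hs : s = sa - ia)
    (K : DGModule A)
    (r : ℤ)
    (D : SyzygyData A K r) :
    (∀ k ∈ D.syz.hSet, k ≤ s + r) ∧ (∀ k ∈ D.syz.hSet, r ≤ k) ∧
      (∀ k₁ ∈ D.syz.hSet, ∀ k₂ ∈ D.syz.hSet, k₂ - k₁ ≤ s) := by
  have hia0 : ia ≤ 0 := hia.2 (A.zero_mem_hSet_s6 ⟨sa, hsa.1⟩)
  have hsup : ∀ k ∈ D.syz.hSet, k ≤ s + r := fun k hk => by
    have := D.le_of_mem_hSet_syz hsa.2 hk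
    omega
  have hinf : ∀ k ∈ D.syz.hSet, r ≤ k := fun k hk => D.syz.le_of_mem_hSet D.below hk
  exact ⟨hsup, hinf, fun k₁ h₁ k₂ h₂ => by linarith [hsup k₂ h₂, hinf k₁ h₁]⟩

/-- Let `(A, m_A)` be a local homologically bounded DG algebra with
`amp H(A) = s`, `A ≄ 0` and `m_A = A_+` (so `A_0` is a field).  If `K` is homologically
finite with `amp H(K) ≤ s`, `r ≥ sup H(K)`, and `K' = Syz_r(K)`, then
`sup H(K') ≤ s + r`, `inf H(K') ≥ r`, and therefore `amp H(K') ≤ s`. -/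
theorem stmt6 (A : DGAlgebra.{u})
    (hfield : ∀ a ∈ A.grading 0, a ≠ 0 → IsUnit a)
    (sa ia s : ℤ)
    (hsa : IsGreatest A.toDGModule.hSet sa)
    (hia : IsLeast A.toDGModule.hSet ia)
    (hs : s = sa - ia)
    (K : DGModule A)
    (hKbdd : BddAbove K.hSet ∧ BddBelow K.hSet)
    (hKamp : ∀ k₁ ∈ K.hSet, ∀ k₂ ∈ K.hSet, k₂ - k₁ ≤ s)
    (r : ℤ) (hr : ∀ k ∈ K.hSet, k ≤ r)
    (D : SyzygyData A K r) :
    (∀ k ∈ D.syz.hSet, k ≤ s + r) ∧ (∀ k ∈ D.syz.hSet, r ≤ k) ∧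
      (∀ k₁ ∈ D.syz.hSet, ∀ k₂ ∈ D.syz.hSet, k₂ - k₁ ≤ s) :=
  stmt6_general A sa ia s hsa hia hs K r D
end
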